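/- Let a > 0 and b > 0. There exist constants c_1, c_2 > 0 such that for all t ∈ Z^d and all positive integers m: (1) if ‖t‖ > bm then e^{-a‖t‖} ≤ Σ_{‖x‖ ≤ bm} e^{-a(‖x‖²/m + ‖x-t‖)} ≤ c_1 e^{-c_2‖t‖}; (2) if ‖t‖ ≤ bm then e^{-a‖t‖²/m} ≤ Σ_{‖x‖ ≤ bm} e^{-a(‖x‖²/m + ‖x-t‖)} ≤ c_1 e^{-c_2‖t‖²/m}. -/

import Mathlib

/-- Euclidean norm of a lattice point of `ℤ^d`. -/
noncomputable def znorm {d : ℕ} (x : Fin d → ℤ) : ℝ :=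
  Real.sqrt (∑ i, ((x i : ℝ)) ^ 2)

/-!
Write `z = ‖x‖` and `w = ‖x - t‖`. The lower bounds are single terms of the sum: `x = 0` when
`‖t‖ > bm` and `x = t` when `‖t‖ ≤ bm`. For the upper bounds, the triangle inequality
`‖t‖ ≤ z + w` forces either `z ≥ ‖t‖/2` or `w ≥ ‖t‖/2`, so the exponent `z²/m + w` is at least
`min (‖t‖²/4m) (‖t‖/2)`, which is `≳ ‖t‖` for `‖t‖ > bm` and `≳ ‖t‖²/m` for `‖t‖ ≤ bm`. Spending
half of the exponent on this bound and the other half on `w` leaves the summable factor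
`e^{-a‖x - t‖/2}`, whose sum over `ℤ^d` is a constant by translation invariance.
-/

open Real

section LatticeNorm

variable {d : ℕ}

noncomputable def latticeToEuclidean : (Fin d → ℤ) →+ EuclideanSpace ℝ (Fin d) where
  toFun x := WithLp.toLp 2 fun i => (x i : ℝ)
  map_zero' := by ext; simp
  map_add' x y := by ext; simp

lemma znorm_eq_norm (x : Fin d → ℤ) : znorm x = ‖latticeToEuclidean x‖ := by
  simp [znorm, latticeToEuclidean, EuclideanSpace.norm_eq]

lemma znorm_nonneg (x : Fin d → ℤ) : 0 ≤ znorm x := sqrt_nonneg _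

@[simp]
lemma znorm_zero : znorm (0 : Fin d → ℤ) = 0 := by simp [znorm]

@[simp]
lemma znorm_neg (x : Fin d → ℤ) : znorm (-x) = znorm x := by simp [znorm]

lemma znorm_sub_znorm_le (x t : Fin d → ℤ) : znorm t - znorm x ≤ znorm (x - t) := by
  simpa only [znorm_eq_norm, map_sub, norm_sub_rev] using
    norm_sub_norm_le (latticeToEuclidean t) (latticeToEuclidean x)

lemma abs_le_znorm (x : Fin d → ℤ) (i : Fin d) : |(x i : ℝ)| ≤ znorm x := by
  simpa [znorm_eq_norm, latticeToEuclidean] using PiLp.norm_apply_le (latticeToEuclidean x) i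

end LatticeNorm

section Summability

theorem summable_prod_fin_pi {α : Type*} {g : α → ℝ} (hg : Summable g) (hg0 : 0 ≤ g) :
    ∀ n : ℕ, Summable fun x : Fin n → α => ∏ i, g (x i)
  | 0 => .of_finite
  | n + 1 => by
    have hcons := hg.mul_of_nonneg (summable_prod_fin_pi hg hg0 n) hg0
      fun x => Finset.prod_nonneg fun i _ => hg0 (x i)
    have hsplit : (fun x : Fin (n + 1) → α => ∏ i, g (x i)) =
        (fun p : α × (Fin n → α) => g p.1 * ∏ i, g (p.2 i)) ∘ (Fin.consEquiv fun _ => α).symm := by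
      funext x
      simp [Fin.consEquiv, Fin.prod_univ_succ, Fin.tail]
    rw [hsplit]
    exact (Fin.consEquiv fun _ => α).symm.summable_iff.mpr hcons

lemma summable_exp_neg_mul_abs_int {c : ℝ} (hc : 0 < c) :
    Summable fun n : ℤ => exp (-c * |(n : ℝ)|) := by
  have hnat : Summable fun n : ℕ => exp (n * -c) :=
    summable_exp_nat_mul_iff.mpr (neg_neg_of_pos hc)
  apply Summable.of_nat_of_neg <;> simpa [mul_comm] using hnat

/-- Dominated by the product of one-dimensional sums, since `∑ᵢ |xᵢ| ≤ (d + 1) ‖x‖`. -/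
lemma summable_exp_neg_mul_znorm {d : ℕ} {c : ℝ} (hc : 0 < c) :
    Summable fun x : Fin d → ℤ => exp (-c * znorm x) := by
  set c' := c / (d + 1)
  have hc' : 0 < c' := by positivity
  refine (summable_prod_fin_pi (summable_exp_neg_mul_abs_int hc') (fun _ => (exp_pos _).le) d)
    |>.of_nonneg_of_le (fun _ => (exp_pos _).le) fun x => ?_
  rw [← exp_sum, exp_le_exp, ← Finset.mul_sum]
  have hsum : ∑ i, |(x i : ℝ)| ≤ (d + 1) * znorm x :=
    calc ∑ i, |(x i : ℝ)| ≤ ∑ _i : Fin d, znorm x := Finset.sum_le_sum fun i _ => abs_le_znorm x i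
      _ = d * znorm x := by simp
      _ ≤ (d + 1) * znorm x := by nlinarith [znorm_nonneg x]
  rw [neg_mul, neg_mul, neg_le_neg_iff]
  calc c' * ∑ i, |(x i : ℝ)| ≤ c' * ((d + 1) * znorm x) := by gcongr
    _ = c * znorm x := by rw [← mul_assoc, div_mul_cancel₀ c (by positivity)]

end Summability

section Exponent

variable {b m T : ℝ}

lemma min_sq_div_half_le {z w : ℝ} (hT : 0 ≤ T) (hw : 0 ≤ w) (hm : 0 ≤ m) (h : T ≤ z + w) :
    min (T ^ 2 / (4 * m)) (T / 2) ≤ z ^ 2 / m + w := by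
  rcases le_or_gt (T / 2) z with hz | hz
  · have : T ^ 2 / (4 * m) ≤ z ^ 2 / m := by
      rw [show T ^ 2 / (4 * m) = (T / 2) ^ 2 / m by ring]
      gcongr
    exact (min_le_left _ _).trans (by linarith)
  · exact (min_le_right _ _).trans (by linarith [div_nonneg (sq_nonneg z) hm])

lemma mul_le_min_sq_div_half_of_mul_lt (hm : 0 < m) (hT : 0 ≤ T) (h : b * m < T) :
    min (b / 4) (1 / 2) * T ≤ min (T ^ 2 / (4 * m)) (T / 2) := by
  refine le_min ?_ ?_
  · calc min (b / 4) (1 / 2) * T ≤ b / 4 * T := by gcongr; exact min_le_left _ _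
      _ ≤ T ^ 2 / (4 * m) := by rw [le_div_iff₀ (by positivity)]; nlinarith
  · calc min (b / 4) (1 / 2) * T ≤ 1 / 2 * T := by gcongr; exact min_le_right _ _
      _ = T / 2 := by ring

lemma mul_sq_div_le_min_sq_div_half_of_le_mul (hb : 0 < b) (hm : 0 < m) (hT : 0 ≤ T)
    (h : T ≤ b * m) :
    min (1 / 4) (1 / (2 * b)) * (T ^ 2 / m) ≤ min (T ^ 2 / (4 * m)) (T / 2) := by
  refine le_min ?_ ?_
  · calc min (1 / 4) (1 / (2 * b)) * (T ^ 2 / m) ≤ 1 / 4 * (T ^ 2 / m) := by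
          gcongr; exact min_le_left _ _
      _ = T ^ 2 / (4 * m) := by ring
  · calc min (1 / 4) (1 / (2 * b)) * (T ^ 2 / m) ≤ 1 / (2 * b) * (T ^ 2 / m) := by
          gcongr; exact min_le_right _ _
      _ ≤ T / 2 := by
          rw [div_mul_div_comm, div_le_div_iff₀ (by positivity) (by positivity)]; nlinarith

lemma exp_neg_mul_le_exp_neg_half_mul_add {a E q w : ℝ} (ha : 0 ≤ a) (hq : q ≤ E)
    (hw : w ≤ E) : exp (-a * E) ≤ exp (-(a / 2) * q) * exp (-(a / 2) * w) := by
  rw [← exp_add, exp_le_exp]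
  nlinarith

end Exponent

section GaussExpSum

variable {d : ℕ} {a b q : ℝ} {m : ℕ} {t : Fin d → ℤ}

/-- The summand of `Σ_{‖x‖ ≤ bm} e^{-a(‖x‖²/m + ‖x-t‖)}`, extended by zero to all of `ℤ^d`. -/
noncomputable def gaussExpTerm (a b : ℝ) (m : ℕ) (t x : Fin d → ℤ) : ℝ :=
  if znorm x ≤ b * m then exp (-a * (znorm x ^ 2 / m + znorm (x - t))) else 0

lemma gaussExpTerm_nonneg (x : Fin d → ℤ) : 0 ≤ gaussExpTerm a b m t x := by
  unfold gaussExpTerm; split_ifs <;> positivity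

lemma gaussExpTerm_le (ha : 0 ≤ a) (hq : ∀ x, q ≤ znorm x ^ 2 / m + znorm (x - t))
    (x : Fin d → ℤ) :
    gaussExpTerm a b m t x ≤ exp (-(a / 2) * q) * exp (-(a / 2) * znorm (x - t)) := by
  unfold gaussExpTerm
  split_ifs
  · refine exp_neg_mul_le_exp_neg_half_mul_add ha (hq x) ?_
    linarith [div_nonneg (sq_nonneg (znorm x)) (Nat.cast_nonneg (α := ℝ) m)]
  · positivity

lemma summable_exp_neg_mul_znorm_sub {c : ℝ} (hc : 0 < c) (t : Fin d → ℤ) :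
    Summable fun x : Fin d → ℤ => exp (-c * znorm (x - t)) :=
  (Equiv.subRight t).summable_iff.mpr (summable_exp_neg_mul_znorm hc)

lemma tsum_exp_neg_mul_znorm_sub (c : ℝ) (t : Fin d → ℤ) :
    ∑' x : Fin d → ℤ, exp (-c * znorm (x - t)) = ∑' x : Fin d → ℤ, exp (-c * znorm x) :=
  (Equiv.subRight t).tsum_eq fun y => exp (-c * znorm y)

lemma tsum_gaussExpTerm_le (ha : 0 < a) (hq : ∀ x, q ≤ znorm x ^ 2 / m + znorm (x - t)) :
    Summable (gaussExpTerm a b m t) ∧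
      ∑' x, gaussExpTerm a b m t x ≤
        (∑' x : Fin d → ℤ, exp (-(a / 2) * znorm x)) * exp (-(a / 2) * q) := by
  have hdom := (summable_exp_neg_mul_znorm_sub (half_pos ha) t).mul_left (exp (-(a / 2) * q))
  have hsum : Summable (gaussExpTerm a b m t) :=
    hdom.of_nonneg_of_le gaussExpTerm_nonneg (gaussExpTerm_le ha.le hq)
  refine ⟨hsum, (hsum.tsum_le_tsum (gaussExpTerm_le ha.le hq) hdom).trans_eq ?_⟩
  rw [tsum_mul_left, tsum_exp_neg_mul_znorm_sub, mul_comm]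

lemma exp_le_tsum_gaussExpTerm (ha : 0 < a) {x : Fin d → ℤ} (hx : znorm x ≤ b * m) :
    exp (-a * (znorm x ^ 2 / m + znorm (x - t))) ≤ ∑' y, gaussExpTerm a b m t y := by
  have hsum := (tsum_gaussExpTerm_le (b := b) ha fun y =>
    add_nonneg (div_nonneg (sq_nonneg (znorm y)) m.cast_nonneg) (znorm_nonneg (y - t))).1
  simpa only [gaussExpTerm, if_pos hx] using hsum.le_tsum x fun y _ => gaussExpTerm_nonneg y

end GaussExpSum

theorem sum_gaussian_exponential_bounds_general
    (d : ℕ) (a b : ℝ) (ha : 0 < a) (hb : 0 < b) :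
    ∃ c₁ c₂ : ℝ, 0 < c₁ ∧ 0 < c₂ ∧
      ∀ (t : Fin d → ℤ) (m : ℕ), 1 ≤ m →
        ((b * m < znorm t →
          Real.exp (-a * znorm t) ≤
            (∑' x : Fin d → ℤ,
              if znorm x ≤ b * m then
                Real.exp (-a * ((znorm x) ^ 2 / m + znorm (x - t))) else 0) ∧
          (∑' x : Fin d → ℤ,
              if znorm x ≤ b * m then
                Real.exp (-a * ((znorm x) ^ 2 / m + znorm (x - t))) else 0) ≤
            c₁ * Real.exp (-c₂ * znorm t)) ∧
        (znorm t ≤ b * m →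
          Real.exp (-a * (znorm t) ^ 2 / m) ≤
            (∑' x : Fin d → ℤ,
              if znorm x ≤ b * m then
                Real.exp (-a * ((znorm x) ^ 2 / m + znorm (x - t))) else 0) ∧
          (∑' x : Fin d → ℤ,
              if znorm x ≤ b * m then
                Real.exp (-a * ((znorm x) ^ 2 / m + znorm (x - t))) else 0) ≤
            c₁ * Real.exp (-c₂ * (znorm t) ^ 2 / m))) := by
  set κ := min (min (b / 4) (1 / 2)) (min (1 / 4) (1 / (2 * b)))
  have hc₁ : 0 < ∑' x : Fin d → ℤ, exp (-(a / 2) * znorm x) :=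
    (summable_exp_neg_mul_znorm (half_pos ha)).tsum_pos (fun _ => (exp_pos _).le) 0 (exp_pos _)
  refine ⟨_, a / 2 * κ, hc₁, by positivity, fun t m hm => ?_⟩
  have hm0 : (0 : ℝ) < m := by exact_mod_cast hm
  have hT := znorm_nonneg t
  have hexp (x : Fin d → ℤ) := min_sq_div_half_le (z := znorm x) hT (znorm_nonneg (x - t)) hm0.le
    (by linarith [znorm_sub_znorm_le x t])
  refine ⟨fun hfar => ⟨?_, ?_⟩, fun hnear => ⟨?_, ?_⟩⟩
  · refine Eq.trans_le ?_ (exp_le_tsum_gaussExpTerm ha (x := 0) (by rw [znorm_zero]; positivity))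
    simp
  · have hQ := mul_le_min_sq_div_half_of_mul_lt hm0 hT hfar
    refine ((tsum_gaussExpTerm_le (q := κ * znorm t) ha fun x => ?_).2).trans_eq (by ring_nf)
    exact (mul_le_mul_of_nonneg_right (min_le_left _ _) hT).trans (hQ.trans (hexp x))
  · refine Eq.trans_le ?_ (exp_le_tsum_gaussExpTerm ha hnear)
    simp only [sub_self, znorm_zero, add_zero]
    ring_nf
  · have hQ := mul_sq_div_le_min_sq_div_half_of_le_mul hb hm0 hT hnear
    refine ((tsum_gaussExpTerm_le (q := κ * (znorm t ^ 2 / m)) ha fun x => ?_).2).trans_eq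
      (by ring_nf)
    exact (mul_le_mul_of_nonneg_right (min_le_right _ _) (by positivity)).trans
      (hQ.trans (hexp x))

/-- Two-sided bounds for `Σ_{‖x‖ ≤ bm} e^{-a(‖x‖²/m + ‖x-t‖)}`, with constants
depending only on `a`, `b`, `d`. -/
theorem sum_gaussian_exponential_bounds
    (d : ℕ) (hd : 1 ≤ d) (a b : ℝ) (ha : 0 < a) (hb : 0 < b) :
    ∃ c₁ c₂ : ℝ, 0 < c₁ ∧ 0 < c₂ ∧
      ∀ (t : Fin d → ℤ) (m : ℕ), 1 ≤ m →
        ((b * m < znorm t →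
          Real.exp (-a * znorm t) ≤
            (∑' x : Fin d → ℤ,
              if znorm x ≤ b * m then
                Real.exp (-a * ((znorm x) ^ 2 / m + znorm (x - t))) else 0) ∧
          (∑' x : Fin d → ℤ,
              if znorm x ≤ b * m then
                Real.exp (-a * ((znorm x) ^ 2 / m + znorm (x - t))) else 0) ≤
            c₁ * Real.exp (-c₂ * znorm t)) ∧
        (znorm t ≤ b * m →
          Real.exp (-a * (znorm t) ^ 2 / m) ≤
            (∑' x : Fin d → ℤ,
              if znorm x ≤ b * m then
                Real.exp (-a * ((znorm x) ^ 2 / m + znorm (x - t))) else 0) ∧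
          (∑' x : Fin d → ℤ,
              if znorm x ≤ b * m then
                Real.exp (-a * ((znorm x) ^ 2 / m + znorm (x - t))) else 0) ≤
            c₁ * Real.exp (-c₂ * (znorm t) ^ 2 / m))) :=
  sum_gaussian_exponential_bounds_general d a b ha hb
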